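/- There is an absolute constant c > 0 such that the following holds. Let δ ∈ (0,1] and let N, N' ∈ ℕ satisfy N' ≥ (δ/2)^{−1/2}·N and N ≥ 2δ^{−1}, and let f : ℤ² → ℂ be a 1-bounded function supported on [N]². Then: (i) if ‖f‖_{e_1·[±N']}² ≥ δN², there is a 1-bounded b : ℤ → ℂ with Re(∑_{x,y} f(x,y) b(y)) ≥ c·δ^{5/4}·N²; (ii) if ‖f‖_{e_2·[±N']}² ≥ δN², there is a 1-bounded b : ℤ → ℂ with Re(∑_{x,y} f(x,y) b(x)) ≥ c·δ^{5/4}·N²; (iii) if ‖f‖_{(e_2−e_1)·[±N']}² ≥ δN², there is a 1-bounded b : ℤ → ℂ with Re(∑_{x,y} f(x,y) b(x+y)) ≥ c·δ^{5/4}·N². -/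

import Mathlib

/-!
An additive change of coordinates taking the direction to `e₂ = (0, 1)` turns `f` into `g`,
whose lines in that direction are the columns `{z} × ℤ`, each carrying `g(z, ·)` inside `[N]`.
Since `N' ≥ N`, all but at most `2N` of the windows `∑_{|h| < N'} g(z, t + h)` equal the
column sum `S_z`, so `(2N' - 1)² ‖f‖²` is at most `(2N' - 1) N ∑_z |S_z| + 2 N⁴`. The lower
bound on `N'` makes the error term at most half of `δ N² (2N' - 1)²`, which forces
`∑_z |S_z| ≥ √δ N² ≥ δ^{5/4} N²`; the phases `b(z) = conj S_z / |S_z|` realise this sum.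
-/

open Finset

noncomputable section

/-- `[N] = {0, 1, ..., N-1}` as a finset of integers. -/
def I0 (N : ℤ) : Finset ℤ := Finset.Ico 0 N

/-- `[±N] = {-N+1, ..., N-1}` as a finset of integers. -/
def Ipm (N : ℤ) : Finset ℤ := Finset.Ioo (-N) N

/-- `f` is 1-bounded. -/
def Bounded1 {α : Type*} (f : α → ℂ) : Prop := ∀ x, ‖f x‖ ≤ 1

/-- `f : ℤ² → ℂ` is supported on `[N]²`. -/
def SuppOn2 (N : ℤ) (f : ℤ × ℤ → ℂ) : Prop :=
  ∀ p : ℤ × ℤ, f p ≠ 0 → p.1 ∈ I0 N ∧ p.2 ∈ I0 N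

/-- Iterated complex conjugation `𝒞^n`. -/
def conjIter (n : ℕ) (z : ℂ) : ℂ := if Even n then z else (starRingEnd ℂ) z

/-- The `2^s`-th power of the box norm of `f` along the finsets `E 0, ..., E (s-1)`. -/
def boxPow {G : Type*} [AddCommGroup G] {s : ℕ} (E : Fin s → Finset G) (f : G → ℂ) : ℂ :=
  (∑ h ∈ Fintype.piFinset E, ∑ h' ∈ Fintype.piFinset E,
      ∑' x : G, ∏ ε : Fin s → Bool,
        conjIter (Finset.univ.filter (fun i => ε i)).card
          (f (x + ∑ i, if ε i then h' i else h i)))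
    / ((∏ i, ((E i).card : ℂ)) ^ 2)

/-- The dilate `{v·h : h ∈ S} ⊆ ℤ²` of a finset `S ⊆ ℤ` along the direction `v ∈ ℤ²`. -/
def dil (v : ℤ × ℤ) (S : Finset ℤ) : Finset (ℤ × ℤ) := S.image (fun h => (v.1 * h, v.2 * h))

lemma sum_piFinset_fin_one {G M : Type*} [DecidableEq G] [AddCommMonoid M] (E : Finset G)
    (F : (Fin 1 → G) → M) :
    ∑ h ∈ Fintype.piFinset (fun _ : Fin 1 => E), F h = ∑ a ∈ E, F (fun _ => a) := by
  refine sum_nbij' (fun h => h 0) (fun a _ => a) (fun h hh => Fintype.mem_piFinset.1 hh 0)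
    (fun a ha => Fintype.mem_piFinset.2 fun _ => ha) (fun h _ => ?_) (fun _ _ => rfl)
    (fun h _ => ?_)
  all_goals
    have : h = fun _ => h 0 := funext fun i => by rw [Subsingleton.elim i 0]
    rw [← this]

lemma boxPow_fin_one {G : Type*} [AddCommGroup G] (E : Finset G) (f : G → ℂ) :
    boxPow (fun _ : Fin 1 => E) f
      = (∑ a ∈ E, ∑ b ∈ E, ∑' x, starRingEnd ℂ (f (x + b)) * f (x + a)) / (#E : ℂ) ^ 2 := by
  classical
  simp only [boxPow, sum_piFinset_fin_one, Fin.prod_univ_one]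
  congr! 5 with a _ b _ x
  rw [← (Equiv.funUnique (Fin 1) Bool).symm.prod_comp, Fintype.prod_bool]
  simp [conjIter]

lemma re_boxPow_fin_one {G : Type*} [AddCommGroup G] (E : Finset G) {f : G → ℂ}
    (hf : f.support.Finite) :
    (boxPow (fun _ : Fin 1 => E) f).re = (∑' x, ‖∑ a ∈ E, f (x + a)‖ ^ 2) / #E ^ 2 := by
  have hshift : ∀ a, (fun x => f (x + a)).support.Finite := fun a =>
    hf.preimage (add_left_injective a).injOn
  have hsum : ∀ a b, Summable fun x => starRingEnd ℂ (f (x + b)) * f (x + a) := fun a b =>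
    summable_of_hasFiniteSupport ((hshift a).subset (Function.support_mul_subset_right _ _))
  have hexpand : ∑ a ∈ E, ∑ b ∈ E, ∑' x, starRingEnd ℂ (f (x + b)) * f (x + a)
      = ∑' x, ((‖∑ a ∈ E, f (x + a)‖ ^ 2 : ℝ) : ℂ) := by
    rw [sum_congr rfl fun a _ => (Summable.tsum_finsetSum fun b _ => hsum a b).symm,
      ← Summable.tsum_finsetSum fun a _ => summable_sum fun b _ => hsum a b]
    refine tsum_congr fun x => ?_
    rw [Complex.ofReal_pow, ← Complex.mul_conj', mul_comm, map_sum, sum_mul_sum, sum_comm]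
  rw [boxPow_fin_one, hexpand, ← Complex.ofReal_tsum, ← Complex.ofReal_natCast,
    ← Complex.ofReal_pow, ← Complex.ofReal_div, Complex.ofReal_re]

lemma sum_dil {M : Type*} [AddCommMonoid M] {v : ℤ × ℤ} (hv : v ≠ 0) (S : Finset ℤ)
    (F : ℤ × ℤ → M) : ∑ a ∈ dil v S, F a = ∑ h ∈ S, F (h • v) := by
  have hsmul : (fun h : ℤ => (v.1 * h, v.2 * h)) = fun h => h • v := by
    ext h <;> simp [mul_comm]
  rw [dil, hsmul, sum_image fun _ _ _ _ hh => smul_left_injective ℤ hv hh]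

lemma card_dil {v : ℤ × ℤ} (hv : v ≠ 0) (S : Finset ℤ) : #(dil v S) = #S := by
  rw [card_eq_sum_ones, card_eq_sum_ones, sum_dil hv]

lemma norm_sum_le_sum_norm_of_support_subset {ι E : Type*} [NormedAddCommGroup E] {u : ι → E}
    {B : Finset ι} (hu : ∀ s, u s ≠ 0 → s ∈ B) (A : Finset ι) :
    ‖∑ s ∈ A, u s‖ ≤ ∑ s ∈ B, ‖u s‖ := by
  classical
  calc ‖∑ s ∈ A, u s‖ ≤ ∑ s ∈ A, ‖u s‖ := norm_sum_le _ _
    _ = ∑ s ∈ A ∩ B, ‖u s‖ := by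
      refine (sum_subset inter_subset_left fun s hsA hs => ?_).symm
      by_contra h
      exact hs (mem_inter.2 ⟨hsA, hu s (norm_ne_zero_iff.1 h)⟩)
    _ ≤ ∑ s ∈ B, ‖u s‖ :=
      sum_le_sum_of_subset_of_nonneg inter_subset_right fun _ _ _ => norm_nonneg _

lemma sum_Ipm_add_eq_sum_Ioo (u : ℤ → ℂ) (t M : ℤ) :
    ∑ h ∈ Ipm M, u (t + h) = ∑ s ∈ Ioo (t - M) (t + M), u s := by
  rw [Ipm, sub_eq_add_neg, ← map_add_left_Ioo, sum_map]
  rfl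

section Window

variable {N N' : ℕ} {u : ℤ → ℂ}

lemma sum_Ipm_add_eq_sum_I0 (hu : ∀ s, u s ≠ 0 → s ∈ I0 N) {t : ℤ}
    (ht : t ∈ Ico ((N : ℤ) - N') N') :
    ∑ h ∈ Ipm N', u (t + h) = ∑ s ∈ I0 N, u s := by
  rw [sum_Ipm_add_eq_sum_Ioo]
  refine (sum_subset (fun s hs => ?_) fun s _ hs => ?_).symm
  · simp only [I0, mem_Ico, mem_Ioo] at hs ht ⊢; omega
  · by_contra h; exact hs (hu s h)

lemma sum_Ipm_add_eq_zero (hu : ∀ s, u s ≠ 0 → s ∈ I0 N) {t : ℤ}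
    (ht : t ∉ Ioo (-(N' : ℤ)) (N + N' - 1)) : ∑ h ∈ Ipm N', u (t + h) = 0 := by
  rw [sum_Ipm_add_eq_sum_Ioo]
  refine sum_eq_zero fun s hs => ?_
  by_contra h
  have := hu s h
  simp only [I0, mem_Ico, mem_Ioo] at hs ht this
  omega

lemma sum_norm_sq_sum_Ipm_add_le (hN : 0 < N) (hNN' : N ≤ N') (hu : ∀ s, u s ≠ 0 → s ∈ I0 N) :
    ∑ t ∈ Ioo (-(N' : ℤ)) (N + N' - 1), ‖∑ h ∈ Ipm N', u (t + h)‖ ^ 2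
      ≤ (2 * N' - N) * ‖∑ s ∈ I0 N, u s‖ ^ 2 + 2 * N * (∑ s ∈ I0 N, ‖u s‖) ^ 2 := by
  set full := Ico ((N : ℤ) - N') N'
  have hfull : full ⊆ Ioo (-(N' : ℤ)) (N + N' - 1) := fun t ht => by
    simp only [full, mem_Ico, mem_Ioo] at ht ⊢; omega
  have hcard_full : (#full : ℝ) = 2 * N' - N := by
    simp only [full, Int.card_Ico]
    rw [show (N' : ℤ) - (N - N') = ((2 * N' - N : ℕ) : ℤ) by omega, Int.toNat_natCast]
    rw [Nat.cast_sub (by omega)]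
    push_cast; ring
  have hcard_edge : (#(Ioo (-(N' : ℤ)) (N + N' - 1) \ full) : ℝ) ≤ 2 * N := by
    have : #(Ioo (-(N' : ℤ)) (N + N' - 1)) - #full ≤ 2 * N := by
      simp only [full, Int.card_Ioo, Int.card_Ico]; omega
    rw [card_sdiff_of_subset hfull]
    exact_mod_cast this
  rw [← sum_sdiff hfull, add_comm]
  gcongr ?_ + ?_
  · rw [sum_congr rfl fun t ht => by rw [sum_Ipm_add_eq_sum_I0 hu ht], sum_const, nsmul_eq_mul,
      hcard_full]
  · calc _ ≤ ∑ _t ∈ Ioo (-(N' : ℤ)) (N + N' - 1) \ full, (∑ s ∈ I0 N, ‖u s‖) ^ 2 := by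
          gcongr with t
          rw [sum_Ipm_add_eq_sum_Ioo]
          exact norm_sum_le_sum_norm_of_support_subset hu _
      _ ≤ _ := by
        rw [sum_const, nsmul_eq_mul]
        gcongr

end Window

section Vertical

variable {N N' : ℕ} {g : ℤ × ℤ → ℂ} {Z : Finset ℤ}

lemma tsum_norm_sq_sum_Ipm_vertical_eq (hsupp : ∀ p, g p ≠ 0 → p ∈ Z ×ˢ I0 N) :
    ∑' p, ‖∑ h ∈ Ipm N', g (p + (0, h))‖ ^ 2
      = ∑ z ∈ Z, ∑ t ∈ Ioo (-(N' : ℤ)) (N + N' - 1), ‖∑ h ∈ Ipm N', g (z, t + h)‖ ^ 2 := by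
  have hvert : ∀ (p : ℤ × ℤ) (h : ℤ), p + (0, h) = (p.1, p.2 + h) := fun p h => by ext <;> simp
  simp only [hvert]
  rw [← sum_product (f := fun p : ℤ × ℤ => ‖∑ h ∈ Ipm N', g (p.1, p.2 + h)‖ ^ 2)]
  refine tsum_eq_sum fun p hp => ?_
  rw [sq_eq_zero_iff, norm_eq_zero]
  rcases not_and_or.1 (mem_product.not.1 hp) with hz | ht
  · exact sum_eq_zero fun h _ => by
      by_contra h0; exact hz (mem_product.1 (hsupp _ h0)).1
  · exact sum_Ipm_add_eq_zero (fun s h0 => (mem_product.1 (hsupp _ h0)).2) ht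

lemma tsum_norm_sq_sum_Ipm_vertical_le (hN : 0 < N) (hNN' : N ≤ N') (hg : Bounded1 g)
    (hsupp : ∀ p, g p ≠ 0 → p ∈ Z ×ˢ I0 N) (hmass : ∑' p, ‖g p‖ ≤ (N : ℝ) ^ 2) :
    ∑' p, ‖∑ h ∈ Ipm N', g (p + (0, h))‖ ^ 2
      ≤ (2 * N' - 1) * N * ∑ z ∈ Z, ‖∑ t ∈ I0 N, g (z, t)‖ + 2 * (N : ℝ) ^ 4 := by
  set M : ℤ → ℝ := fun z => ∑ t ∈ I0 N, ‖g (z, t)‖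
  have hM : ∀ z, M z ≤ N := fun z => by
    calc M z ≤ ∑ _t ∈ I0 N, (1 : ℝ) := sum_le_sum fun t _ => hg _
      _ = N := by simp [I0]
  have hsumM : ∑ z ∈ Z, M z ≤ (N : ℝ) ^ 2 := by
    have : ∑' p, ‖g p‖ = ∑ p ∈ Z ×ˢ I0 N, ‖g p‖ := tsum_eq_sum fun p hp => by
      by_contra h; exact hp (hsupp p (norm_ne_zero_iff.1 h))
    rwa [this, sum_product] at hmass
  have hN1 : (1 : ℝ) ≤ N := by exact_mod_cast hN
  have hNN'r : (N : ℝ) ≤ N' := by exact_mod_cast hNN'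
  have hcolumn : ∀ z, ∑ t ∈ Ioo (-(N' : ℤ)) (N + N' - 1), ‖∑ h ∈ Ipm N', g (z, t + h)‖ ^ 2
      ≤ (2 * N' - 1) * N * ‖∑ t ∈ I0 N, g (z, t)‖ + 2 * N ^ 2 * M z := fun z => by
    have hS : ‖∑ t ∈ I0 N, g (z, t)‖ ≤ M z := norm_sum_le _ _
    have hM0 : 0 ≤ M z := sum_nonneg fun _ _ => norm_nonneg _
    refine (sum_norm_sq_sum_Ipm_add_le hN hNN' fun s h0 => (mem_product.1 (hsupp _ h0)).2).trans
      (add_le_add ?_ ?_)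
    · have := mul_le_mul_of_nonneg_right (hS.trans (hM z)) (norm_nonneg (∑ t ∈ I0 N, g (z, t)))
      nlinarith [norm_nonneg (∑ t ∈ I0 N, g (z, t))]
    · change 2 * (N : ℝ) * M z ^ 2 ≤ _
      nlinarith [mul_le_mul_of_nonneg_right (hM z) hM0]
  rw [tsum_norm_sq_sum_Ipm_vertical_eq hsupp]
  calc _ ≤ ∑ z ∈ Z, ((2 * N' - 1) * N * ‖∑ t ∈ I0 N, g (z, t)‖ + 2 * N ^ 2 * M z) :=
        sum_le_sum fun z _ => hcolumn z
    _ ≤ _ := by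
        rw [sum_add_distrib, ← mul_sum, ← mul_sum]
        nlinarith

end Vertical

lemma exists_bounded_re_tsum_mul_eq {α β : Type*} {g : α × β → ℂ} {Z : Finset α} {T : Finset β}
    (hsupp : ∀ p, g p ≠ 0 → p ∈ Z ×ˢ T) :
    ∃ b : α → ℂ, Bounded1 b ∧ (∑' p, g p * b p.1).re = ∑ z ∈ Z, ‖∑ t ∈ T, g (z, t)‖ := by
  set S : α → ℂ := fun z => ∑ t ∈ T, g (z, t)
  refine ⟨fun z => starRingEnd ℂ (S z) / ‖S z‖, fun z => ?_, ?_⟩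
  · rw [norm_div, Complex.norm_conj, Complex.norm_real, norm_norm]
    exact div_self_le_one _
  · rw [tsum_eq_sum (s := Z ×ˢ T) fun p hp => by
      by_contra h; exact hp (hsupp p (left_ne_zero_of_mul h)), sum_product, Complex.re_sum]
    refine sum_congr rfl fun z _ => ?_
    change (∑ t ∈ T, g (z, t) * (starRingEnd ℂ (S z) / ‖S z‖)).re = ‖S z‖
    rw [← sum_mul, ← mul_div_assoc, Complex.mul_conj', ← Complex.ofReal_pow,
      ← Complex.ofReal_div, Complex.ofReal_re, sq, mul_self_div_self]

lemma sqrt_mul_sq_le_of_quadratic_bound {δ σ : ℝ} (hδ0 : 0 < δ) (hδ1 : δ ≤ 1) {N N' : ℕ}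
    (hN : 0 < N) (hN' : 2 * (N : ℝ) ^ 2 ≤ δ * N' ^ 2)
    (h : δ * N ^ 2 * (2 * N' - 1) ^ 2 ≤ (2 * N' - 1) * N * σ + 2 * N ^ 4) :
    √δ * N ^ 2 ≤ σ := by
  have hN1 : (1 : ℝ) ≤ N := by exact_mod_cast hN
  have hN'2 : (2 : ℝ) ≤ N' := by
    have : 1 < N' := by
      by_contra! h1
      have : (N' : ℝ) ≤ 1 := by exact_mod_cast h1
      nlinarith
    exact_mod_cast this
  set m : ℝ := 2 * N' - 1
  have hm0 : 0 < m := by linarith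
  have hm : 4 * (N : ℝ) ^ 2 ≤ δ * m ^ 2 := by nlinarith
  -- the error term `2 N⁴` is at most half the main term, so `σ ≥ δ N m / 2`
  have hσ' : δ * N * m / 2 ≤ σ := by
    have : 0 < m * N := by positivity
    nlinarith
  have hsq : 2 * N ≤ √δ * m := by
    rw [← Real.sqrt_sq (by positivity : (0 : ℝ) ≤ 2 * N), ← Real.sqrt_sq (by positivity : 0 ≤ m),
      ← Real.sqrt_mul hδ0.le]
    exact Real.sqrt_le_sqrt (by nlinarith)
  calc √δ * N ^ 2 = √δ * N * (2 * N) / 2 := by ring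
    _ ≤ √δ * N * (√δ * m) / 2 := by gcongr
    _ = δ * N * m / 2 := by linear_combination (N * m / 2) * Real.mul_self_sqrt hδ0.le
    _ ≤ σ := hσ'

lemma le_of_two_mul_sq_le_mul_sq {δ : ℝ} (hδ1 : δ ≤ 1) {N N' : ℕ}
    (h : 2 * (N : ℝ) ^ 2 ≤ δ * N' ^ 2) : N ≤ N' := by
  have : (N : ℝ) ^ 2 ≤ N' ^ 2 := by nlinarith [sq_nonneg (N : ℝ), sq_nonneg (N' : ℝ)]
  exact_mod_cast (pow_le_pow_iff_left₀ (Nat.cast_nonneg _) (Nat.cast_nonneg _) two_ne_zero).1 this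

theorem exists_bounded_correlation_of_vertical_window {δ : ℝ} (hδ0 : 0 < δ) (hδ1 : δ ≤ 1)
    {N N' : ℕ} (hN : 0 < N) (hN' : 2 * (N : ℝ) ^ 2 ≤ δ * N' ^ 2) {g : ℤ × ℤ → ℂ} (hg : Bounded1 g)
    {Z : Finset ℤ} (hsupp : ∀ p, g p ≠ 0 → p ∈ Z ×ˢ I0 N) (hmass : ∑' p, ‖g p‖ ≤ (N : ℝ) ^ 2)
    (hbox : δ * N ^ 2 * (2 * N' - 1) ^ 2 ≤ ∑' p, ‖∑ h ∈ Ipm N', g (p + (0, h))‖ ^ 2) :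
    ∃ b : ℤ → ℂ, Bounded1 b ∧ √δ * N ^ 2 ≤ (∑' p, g p * b p.1).re := by
  obtain ⟨b, hb, hre⟩ := exists_bounded_re_tsum_mul_eq hsupp
  have henergy :=
    tsum_norm_sq_sum_Ipm_vertical_le hN (le_of_two_mul_sq_le_mul_sq hδ1 hN') hg hsupp hmass
  exact ⟨b, hb, hre ▸ sqrt_mul_sq_le_of_quadratic_bound hδ0 hδ1 hN hN'
    (hbox.trans henergy)⟩

lemma tsum_norm_le_sq {N : ℕ} {f : ℤ × ℤ → ℂ} (hf : Bounded1 f) (hfs : SuppOn2 N f) :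
    ∑' q, ‖f q‖ ≤ (N : ℝ) ^ 2 := by
  rw [tsum_eq_sum (s := I0 N ×ˢ I0 N) fun q hq => by
    by_contra h; exact hq (mem_product.2 (hfs q (norm_ne_zero_iff.1 h)))]
  calc _ ≤ ∑ _q ∈ I0 N ×ˢ I0 N, (1 : ℝ) := sum_le_sum fun q _ => hf q
    _ = (N : ℝ) ^ 2 := by simp [I0, sq]

lemma card_Ipm {N' : ℕ} (hN' : 1 ≤ N') : (#(Ipm N') : ℝ) = 2 * N' - 1 := by
  rw [Ipm, Int.card_Ioo, show (N' : ℤ) - -N' - 1 = ((2 * N' - 1 : ℕ) : ℤ) by omega,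
    Int.toNat_natCast, Nat.cast_sub (by omega)]
  push_cast; ring

lemma re_boxPow_dil_eq {N' : ℕ} (hN' : 1 ≤ N') {f : ℤ × ℤ → ℂ} (hf : f.support.Finite)
    {v : ℤ × ℤ} (e : ℤ × ℤ ≃+ ℤ × ℤ) (hev : e v = (0, 1)) :
    (boxPow (fun _ : Fin 1 => dil v (Ipm N')) f).re
      = (∑' p, ‖∑ h ∈ Ipm N', f (e.symm (p + (0, h)))‖ ^ 2) / (2 * N' - 1) ^ 2 := by
  have hv : v ≠ 0 := fun hv => by simp [hv, Prod.ext_iff] at hev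
  have hwindow : ∀ x, ∑ a ∈ dil v (Ipm N'), f (x + a)
      = ∑ h ∈ Ipm N', f (e.symm (e x + (0, h))) := fun x => by
    refine (sum_dil hv _ _).trans (sum_congr rfl fun h _ => ?_)
    rw [show ((0 : ℤ), h) = h • e v by simp [hev], ← map_zsmul, ← map_add, e.symm_apply_apply]
  rw [re_boxPow_fin_one _ hf, card_dil hv, card_Ipm hN']
  simp only [hwindow]
  exact congrArg (· / _) (e.toEquiv.tsum_eq fun p => ‖∑ h ∈ Ipm N', f (e.symm (p + (0, h)))‖ ^ 2)

theorem exists_bounded_correlation_of_boxPow_dil {δ : ℝ} (hδ0 : 0 < δ) (hδ1 : δ ≤ 1)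
    {N N' : ℕ} (hN : 0 < N) (hN' : 2 * (N : ℝ) ^ 2 ≤ δ * N' ^ 2) {f : ℤ × ℤ → ℂ}
    (hf : Bounded1 f) (hfs : SuppOn2 N f) {v : ℤ × ℤ} (e : ℤ × ℤ ≃+ ℤ × ℤ) (hev : e v = (0, 1))
    (he : ∀ q : ℤ × ℤ, q.1 ∈ I0 N → q.2 ∈ I0 N → (e q).2 ∈ I0 N)
    (hbox : δ * N ^ 2 ≤ (boxPow (fun _ : Fin 1 => dil v (Ipm N')) f).re) :
    ∃ b : ℤ → ℂ, Bounded1 b ∧ √δ * N ^ 2 ≤ (∑' x, ∑' y, f (x, y) * b (e (x, y)).1).re := by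
  have hfB : ∀ q, f q ≠ 0 → q ∈ I0 N ×ˢ I0 N := fun q hq => mem_product.2 (hfs q hq)
  have hfin : f.support.Finite := (I0 N ×ˢ I0 N).finite_toSet.subset fun q => hfB q
  have hN'1 : (1 : ℝ) ≤ N' := by exact_mod_cast hN.trans_le (le_of_two_mul_sq_le_mul_sq hδ1 hN')
  rw [re_boxPow_dil_eq (by exact_mod_cast hN'1) hfin e hev, le_div_iff₀ (by nlinarith)] at hbox
  have hsupp : ∀ p, f (e.symm p) ≠ 0 → p ∈ ((I0 N ×ˢ I0 N).image fun q => (e q).1) ×ˢ I0 N := by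
    intro p hp
    have hq := hfB _ hp
    have hrow := he _ (mem_product.1 hq).1 (mem_product.1 hq).2
    rw [e.apply_symm_apply] at hrow
    exact mem_product.2 ⟨mem_image.2 ⟨e.symm p, hq, by simp⟩, hrow⟩
  have hmass : ∑' p, ‖f (e.symm p)‖ ≤ (N : ℝ) ^ 2 :=
    (e.symm.toEquiv.tsum_eq fun q => ‖f q‖).trans_le (tsum_norm_le_sq hf hfs)
  obtain ⟨b, hb, hcorr⟩ :=
    exists_bounded_correlation_of_vertical_window hδ0 hδ1 hN hN' (fun p => hf _) hsupp hmass hbox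
  refine ⟨b, hb, hcorr.trans_eq ?_⟩
  have hsum : Summable fun q => f q * b (e q).1 :=
    summable_of_hasFiniteSupport (hfin.subset (Function.support_mul_subset_left _ _))
  rw [← hsum.tsum_prod' hsum.prod_factor, ← e.toEquiv.tsum_eq]
  simp

lemma two_mul_sq_le_of_rpow_mul_le {δ n n' : ℝ} (hδ : 0 < δ) (hn : 0 ≤ n)
    (h : (δ / 2) ^ (-(1 : ℝ) / 2) * n ≤ n') : 2 * n ^ 2 ≤ δ * n' ^ 2 := by
  have hsq : ((δ / 2) ^ (-(1 : ℝ) / 2)) ^ 2 = 2 / δ := by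
    rw [← Real.rpow_natCast, ← Real.rpow_mul (by positivity)]
    norm_num [Real.rpow_neg_one]
  have := pow_le_pow_left₀ (by positivity) h 2
  rw [mul_pow, hsq, div_mul_eq_mul_div, div_le_iff₀ hδ] at this
  linarith

def shearAddEquiv : ℤ × ℤ ≃+ ℤ × ℤ where
  toFun p := (p.1 + p.2, p.2)
  invFun p := (p.1 - p.2, p.2)
  left_inv p := by simp
  right_inv p := by simp
  map_add' p q := by ext <;> simp only [Prod.fst_add, Prod.snd_add]; ring

/-- the two-dimensional `U¹` inverse theorem. -/
theorem stmt13 :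
    ∃ c : ℝ, 0 < c ∧
      ∀ δ : ℝ, 0 < δ → δ ≤ 1 →
      ∀ N N' : ℕ, (δ / 2) ^ (-(1 : ℝ) / 2) * (N : ℝ) ≤ (N' : ℝ) → 2 * δ⁻¹ ≤ (N : ℝ) →
      ∀ f : ℤ × ℤ → ℂ, Bounded1 f → SuppOn2 (N : ℤ) f →
        ((δ * (N : ℝ) ^ 2 ≤ (boxPow (fun _ : Fin 1 => dil (1, 0) (Ipm (N' : ℤ))) f).re →
            ∃ b : ℤ → ℂ, Bounded1 b ∧
              c * δ ^ ((5 : ℝ) / 4) * (N : ℝ) ^ 2 ≤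
                (∑' x : ℤ, ∑' y : ℤ, f (x, y) * b y).re) ∧
          (δ * (N : ℝ) ^ 2 ≤ (boxPow (fun _ : Fin 1 => dil (0, 1) (Ipm (N' : ℤ))) f).re →
            ∃ b : ℤ → ℂ, Bounded1 b ∧
              c * δ ^ ((5 : ℝ) / 4) * (N : ℝ) ^ 2 ≤
                (∑' x : ℤ, ∑' y : ℤ, f (x, y) * b x).re) ∧
          (δ * (N : ℝ) ^ 2 ≤ (boxPow (fun _ : Fin 1 => dil (-1, 1) (Ipm (N' : ℤ))) f).re →
            ∃ b : ℤ → ℂ, Bounded1 b ∧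
              c * δ ^ ((5 : ℝ) / 4) * (N : ℝ) ^ 2 ≤
                (∑' x : ℤ, ∑' y : ℤ, f (x, y) * b (x + y)).re)) := by
  refine ⟨1, one_pos, fun δ hδ0 hδ1 N N' hN' hN f hf hfs => ?_⟩
  have hN0 : 0 < N := by
    have : (1 : ℝ) ≤ δ⁻¹ := (one_le_inv₀ hδ0).2 hδ1
    exact_mod_cast (show (0 : ℝ) < N by linarith)
  have hδpow : 1 * δ ^ ((5 : ℝ) / 4) * N ^ 2 ≤ √δ * N ^ 2 := by
    rw [one_mul, Real.sqrt_eq_rpow]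
    exact mul_le_mul_of_nonneg_right (Real.rpow_le_rpow_of_exponent_ge hδ0 hδ1 (by norm_num))
      (by positivity)
  have hcorr : ∀ {v : ℤ × ℤ} (e : ℤ × ℤ ≃+ ℤ × ℤ), e v = (0, 1) →
      (∀ q : ℤ × ℤ, q.1 ∈ I0 N → q.2 ∈ I0 N → (e q).2 ∈ I0 N) →
      δ * N ^ 2 ≤ (boxPow (fun _ : Fin 1 => dil v (Ipm N')) f).re →
      ∃ b : ℤ → ℂ, Bounded1 b ∧
        1 * δ ^ ((5 : ℝ) / 4) * N ^ 2 ≤ (∑' x, ∑' y, f (x, y) * b (e (x, y)).1).re := by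
    intro v e hev he hbox
    obtain ⟨b, hb, h⟩ := exists_bounded_correlation_of_boxPow_dil hδ0 hδ1 hN0
      (two_mul_sq_le_of_rpow_mul_le hδ0 (Nat.cast_nonneg N) hN') hf hfs e hev he hbox
    exact ⟨b, hb, hδpow.trans h⟩
  exact ⟨hcorr (AddEquiv.prodComm) rfl fun _ h _ => h, hcorr (AddEquiv.refl _) rfl fun _ _ h => h,
    hcorr shearAddEquiv rfl fun _ _ h => h⟩
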